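/- Let V be an n-dimensional Euclidean vector space (n ≥ 4) and W an algebraic Weyl curvature tensor on V. If h is an endomorphism of V such that the Bianchi sum T(x,y,z,u) = W(x,y,hz,u) + W(y,z,hx,u) + W(z,x,hy,u) is totally antisymmetric (a 4-form), then h satisfies the symmetry identity W(hx,y,z,u) + W(x,hy,z,u) = W(x,y,hz,u) + W(x,y,z,hu) for all x,y,z,u in V. -/
import Mathlib


/- Common setup: algebraic Weyl curvature tensors on a Euclidean vector space. -/

open scoped RealInnerProductSpace
open Finset

/-- A curvature-type 4-linear tensor on `V`. -/
abbrev Tensor4 (V : Type*) [NormedAddCommGroup V] [InnerProductSpace ℝ V] : Type _ :=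
  V →ₗ[ℝ] V →ₗ[ℝ] V →ₗ[ℝ] V →ₗ[ℝ] ℝ

variable {V : Type*} [NormedAddCommGroup V] [InnerProductSpace ℝ V] [FiniteDimensional ℝ V]

/-- `W` is an algebraic Weyl curvature tensor: it has the symmetries of a curvature
tensor, satisfies the first Bianchi identity, and is totally trace-free. -/
structure IsWeylTensor (W : Tensor4 V) : Prop where
  antisym₁ : ∀ x y z u, W x y z u = - W y x z u
  antisym₂ : ∀ x y z u, W x y z u = - W x y u z
  pair_symm : ∀ x y z u, W x y z u = W z u x y
  bianchi : ∀ x y z u, W x y z u + W y z x u + W z x y u = 0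
  trace_free : ∀ (b : OrthonormalBasis (Fin (Module.finrank ℝ V)) ℝ V) (x y : V),
      ∑ i, W x (b i) y (b i) = 0

/-- The extension of `W` to endomorphisms, `W(h) = Σᵢ W(eᵢ, ·, h eᵢ, ·)`,
viewed as a bilinear form (identified with an endomorphism via the metric). -/
noncomputable def weylExt {ι : Type*} [Fintype ι]
    (W : Tensor4 V) (b : OrthonormalBasis ι ℝ V) (h : V →ₗ[ℝ] V) (v w : V) : ℝ :=
  ∑ i, W (b i) v (h (b i)) w

/-- The space `E_W`: endomorphisms `h` with `W(x,y,hz,·) + W(y,z,hx,·) + W(z,x,hy,·) = 0`. -/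
def memE (W : Tensor4 V) (h : V →ₗ[ℝ] V) : Prop :=
  ∀ x y z u, W x y (h z) u + W y z (h x) u + W z x (h y) u = 0

/-- The Lie algebra `g_W` of the symmetry group of `W`. -/
def memG (W : Tensor4 V) (h : V →ₗ[ℝ] V) : Prop :=
  ∀ x y z u, W (h x) y z u + W x (h y) z u + W x y (h z) u + W x y z (h u) = 0

/-- Skew-symmetric endomorphisms (identified with 2-forms). -/
def IsSkew (F : V →ₗ[ℝ] V) : Prop := ∀ v w, ⟪F v, w⟫ = - ⟪v, F w⟫

/-- Symmetric endomorphisms. -/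
def IsSym (F : V →ₗ[ℝ] V) : Prop := ∀ v w, ⟪F v, w⟫ = ⟪v, F w⟫

/-- The bilinear form `g(F·,·)` associated to an endomorphism `F`. -/
noncomputable def form (F : V →ₗ[ℝ] V) (v w : V) : ℝ := ⟪F v, w⟫

/-- if the Bianchi sum `T(x,y,z,u) = W(x,y,hz,u) + W(y,z,hx,u) + W(z,x,hy,u)`
is totally antisymmetric (a 4-form), then `h` satisfies
`W(hx,y,z,u) + W(x,hy,z,u) = W(x,y,hz,u) + W(x,y,z,hu)`. -/
theorem stmt0 (hn : 4 ≤ Module.finrank ℝ V) (W : Tensor4 V) (hW : IsWeylTensor W)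
    (h : V →ₗ[ℝ] V) (T : V → V → V → V → ℝ)
    (hT : ∀ x y z u, T x y z u = W x y (h z) u + W y z (h x) u + W z x (h y) u)
    (hT₁ : ∀ x y z u, T x y z u = - T y x z u)
    (hT₂ : ∀ x y z u, T x y z u = - T x z y u)
    (hT₃ : ∀ x y z u, T x y z u = - T x y u z) :
    ∀ x y z u, W (h x) y z u + W x (h y) z u = W x y (h z) u + W x y z (h u) := by
  intro x y z u
  have anti : ∀ a b c d : V, W a b (h c) d + W b a (h c) d = 0 := by
    intro a b c d
    have := hW.antisym₁ a b (h c) d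
    linarith
  have bia : ∀ a b c d : V, W a b (h c) d - W a d (h c) b + W b d (h c) a = 0 := by
    intro a b c d
    have h1 := hW.bianchi a b (h c) d
    have h2 : W b (h c) a d = - W a d (h c) b := by
      rw [hW.pair_symm b (h c) a d, hW.antisym₂ a d b (h c)]
    have h3 : W (h c) a b d = W b d (h c) a := hW.pair_symm _ _ _ _
    linarith
  have hA : ∀ a b c d : V, W a b (h c) d + W b c (h a) d + W c a (h b) d
      + W a b (h d) c + W b d (h a) c + W d a (h b) c = 0 := by
    intro a b c d
    have e1 := hT₃ a b c d
    rw [hT a b c d, hT a b d c] at e1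
    linarith
  have g1 : W (h x) y z u = W z u (h x) y := hW.pair_symm _ _ _ _
  have g2 : W x (h y) z u = - W z u (h y) x := by
    rw [hW.antisym₁ x (h y) z u, hW.pair_symm (h y) x z u]
  have g3 : W x y z (h u) = - W x y (h u) z := hW.antisym₂ _ _ _ _
  have c1 := anti x y z u
  have c2 := hA x y z u
  have c3 := bia x y u z
  have c4 := bia x z y u
  have c5 := hA x z y u
  have c6 := anti x u y z
  have c7 := anti x u z y
  have c8 := bia x u z y
  have c9 := anti y z x u
  have c10 := bia y z x u
  have c11 := hA y z x u
  linarith
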